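/- The Coxeter graph Γ is distance-transitive: for all vertices u, v, u', v' of Γ with dist(u,v) = dist(u',v'), there exists an automorphism φ of Γ with φ(u) = u' and φ(v) = v'. -/
import Mathlib

/-- Vertex set of the Coxeter graph: four concentric 7-tuples `u, v, t, z`. -/
abbrev CoxeterVertex := Fin 4 × ZMod 7

/-- Base (asymmetric) adjacency relation for the Coxeter graph:
`u_x ~ u_{x+1}`, `v_x ~ v_{x+2}`, `t_x ~ t_{x+3}`, and `z_x ~ u_x, v_x, t_x`. -/
def coxeterRel : CoxeterVertex → CoxeterVertex → Prop := fun p q =>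
  (p.1 = 0 ∧ q.1 = 0 ∧ q.2 = p.2 + 1) ∨
  (p.1 = 1 ∧ q.1 = 1 ∧ q.2 = p.2 + 2) ∨
  (p.1 = 2 ∧ q.1 = 2 ∧ q.2 = p.2 + 3) ∨
  (p.1 = 3 ∧ (q.1 = 0 ∨ q.1 = 1 ∨ q.1 = 2) ∧ q.2 = p.2)

/-- The Coxeter graph on 28 vertices. -/
def coxeterGraph : SimpleGraph CoxeterVertex := SimpleGraph.fromRel coxeterRel

instance : DecidableRel coxeterRel := fun p q => by unfold coxeterRel; infer_instance
instance : DecidableRel coxeterGraph.Adj := fun p q =>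
  decidable_of_iff _ (SimpleGraph.fromRel_adj coxeterRel p q).symm

def mkIso (f g : CoxeterVertex → CoxeterVertex)
    (h1 : ∀ p, g (f p) = p) (h2 : ∀ p, f (g p) = p)
    (h3 : ∀ a b, coxeterGraph.Adj (f a) (f b) ↔ coxeterGraph.Adj a b) :
    coxeterGraph ≃g coxeterGraph := ⟨⟨f, g, h1, h2⟩, h3 _ _⟩

def ofT (t : List CoxeterVertex) : CoxeterVertex → CoxeterVertex :=
  fun p => t.getD (p.1.val * 7 + p.2.val) p

def s0T : List CoxeterVertex := [(0,0), (0,1), (0,2), (0,3), (0,4), (0,5), (0,6), (1,0), (1,1), (1,2), (1,3), (1,4), (1,5), (1,6), (2,0), (2,1), (2,2), (2,3), (2,4), (2,5), (2,6), (3,0), (3,1), (3,2), (3,3), (3,4), (3,5), (3,6)]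
def s0I : List CoxeterVertex := [(0,0), (0,1), (0,2), (0,3), (0,4), (0,5), (0,6), (1,0), (1,1), (1,2), (1,3), (1,4), (1,5), (1,6), (2,0), (2,1), (2,2), (2,3), (2,4), (2,5), (2,6), (3,0), (3,1), (3,2), (3,3), (3,4), (3,5), (3,6)]
def s0 : coxeterGraph ≃g coxeterGraph := mkIso (ofT s0T) (ofT s0I) (by decide) (by decide) (by decide)

def s1T : List CoxeterVertex := [(0,0), (0,1), (3,1), (1,1), (1,6), (3,6), (0,6), (2,0), (0,3), (2,4), (3,3), (3,4), (2,3), (0,4), (1,0), (3,2), (2,5), (1,5), (1,2), (2,2), (3,5), (3,0), (0,2), (2,1), (1,3), (1,4), (2,6), (0,5)]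
def s1I : List CoxeterVertex := [(0,0), (0,1), (3,1), (1,1), (1,6), (3,6), (0,6), (2,0), (0,3), (2,4), (3,3), (3,4), (2,3), (0,4), (1,0), (3,2), (2,5), (1,5), (1,2), (2,2), (3,5), (3,0), (0,2), (2,1), (1,3), (1,4), (2,6), (0,5)]
def s1 : coxeterGraph ≃g coxeterGraph := mkIso (ofT s1T) (ofT s1I) (by decide) (by decide) (by decide)

def s2T : List CoxeterVertex := [(0,0), (0,6), (0,5), (0,4), (0,3), (0,2), (0,1), (1,0), (1,6), (1,5), (1,4), (1,3), (1,2), (1,1), (2,0), (2,6), (2,5), (2,4), (2,3), (2,2), (2,1), (3,0), (3,6), (3,5), (3,4), (3,3), (3,2), (3,1)]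
def s2I : List CoxeterVertex := [(0,0), (0,6), (0,5), (0,4), (0,3), (0,2), (0,1), (1,0), (1,6), (1,5), (1,4), (1,3), (1,2), (1,1), (2,0), (2,6), (2,5), (2,4), (2,3), (2,2), (2,1), (3,0), (3,6), (3,5), (3,4), (3,3), (3,2), (3,1)]
def s2 : coxeterGraph ≃g coxeterGraph := mkIso (ofT s2T) (ofT s2I) (by decide) (by decide) (by decide)

def s3T : List CoxeterVertex := [(0,0), (0,6), (3,6), (1,6), (1,1), (3,1), (0,1), (2,0), (0,4), (2,3), (3,4), (3,3), (2,4), (0,3), (1,0), (3,5), (2,2), (1,2), (1,5), (2,5), (3,2), (3,0), (0,5), (2,6), (1,4), (1,3), (2,1), (0,2)]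
def s3I : List CoxeterVertex := [(0,0), (0,6), (3,6), (1,6), (1,1), (3,1), (0,1), (2,0), (0,4), (2,3), (3,4), (3,3), (2,4), (0,3), (1,0), (3,5), (2,2), (1,2), (1,5), (2,5), (3,2), (3,0), (0,5), (2,6), (1,4), (1,3), (2,1), (0,2)]
def s3 : coxeterGraph ≃g coxeterGraph := mkIso (ofT s3T) (ofT s3I) (by decide) (by decide) (by decide)

def s4T : List CoxeterVertex := [(1,0), (1,2), (1,4), (1,6), (1,1), (1,3), (1,5), (2,0), (2,2), (2,4), (2,6), (2,1), (2,3), (2,5), (0,0), (0,2), (0,4), (0,6), (0,1), (0,3), (0,5), (3,0), (3,2), (3,4), (3,6), (3,1), (3,3), (3,5)]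
def s4I : List CoxeterVertex := [(2,0), (2,4), (2,1), (2,5), (2,2), (2,6), (2,3), (0,0), (0,4), (0,1), (0,5), (0,2), (0,6), (0,3), (1,0), (1,4), (1,1), (1,5), (1,2), (1,6), (1,3), (3,0), (3,4), (3,1), (3,5), (3,2), (3,6), (3,3)]
def s4 : coxeterGraph ≃g coxeterGraph := mkIso (ofT s4T) (ofT s4I) (by decide) (by decide) (by decide)

def s5T : List CoxeterVertex := [(1,0), (1,2), (3,2), (2,2), (2,5), (3,5), (1,5), (0,0), (1,6), (0,1), (3,6), (3,1), (0,6), (1,1), (2,0), (3,4), (0,3), (2,3), (2,4), (0,4), (3,3), (3,0), (1,4), (0,2), (2,6), (2,1), (0,5), (1,3)]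
def s5I : List CoxeterVertex := [(1,0), (1,2), (3,2), (2,2), (2,5), (3,5), (1,5), (0,0), (1,6), (0,1), (3,6), (3,1), (0,6), (1,1), (2,0), (3,4), (0,3), (2,3), (2,4), (0,4), (3,3), (3,0), (1,4), (0,2), (2,6), (2,1), (0,5), (1,3)]
def s5 : coxeterGraph ≃g coxeterGraph := mkIso (ofT s5T) (ofT s5I) (by decide) (by decide) (by decide)

def s6T : List CoxeterVertex := [(1,0), (1,5), (1,3), (1,1), (1,6), (1,4), (1,2), (2,0), (2,5), (2,3), (2,1), (2,6), (2,4), (2,2), (0,0), (0,5), (0,3), (0,1), (0,6), (0,4), (0,2), (3,0), (3,5), (3,3), (3,1), (3,6), (3,4), (3,2)]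
def s6I : List CoxeterVertex := [(2,0), (2,3), (2,6), (2,2), (2,5), (2,1), (2,4), (0,0), (0,3), (0,6), (0,2), (0,5), (0,1), (0,4), (1,0), (1,3), (1,6), (1,2), (1,5), (1,1), (1,4), (3,0), (3,3), (3,6), (3,2), (3,5), (3,1), (3,4)]
def s6 : coxeterGraph ≃g coxeterGraph := mkIso (ofT s6T) (ofT s6I) (by decide) (by decide) (by decide)

def s7T : List CoxeterVertex := [(1,0), (1,5), (3,5), (2,5), (2,2), (3,2), (1,2), (0,0), (1,1), (0,6), (3,1), (3,6), (0,1), (1,6), (2,0), (3,3), (0,4), (2,4), (2,3), (0,3), (3,4), (3,0), (1,3), (0,5), (2,1), (2,6), (0,2), (1,4)]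
def s7I : List CoxeterVertex := [(1,0), (1,5), (3,5), (2,5), (2,2), (3,2), (1,2), (0,0), (1,1), (0,6), (3,1), (3,6), (0,1), (1,6), (2,0), (3,3), (0,4), (2,4), (2,3), (0,3), (3,4), (3,0), (1,3), (0,5), (2,1), (2,6), (0,2), (1,4)]
def s7 : coxeterGraph ≃g coxeterGraph := mkIso (ofT s7T) (ofT s7I) (by decide) (by decide) (by decide)

def s8T : List CoxeterVertex := [(2,0), (2,3), (2,6), (2,2), (2,5), (2,1), (2,4), (0,0), (0,3), (0,6), (0,2), (0,5), (0,1), (0,4), (1,0), (1,3), (1,6), (1,2), (1,5), (1,1), (1,4), (3,0), (3,3), (3,6), (3,2), (3,5), (3,1), (3,4)]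
def s8I : List CoxeterVertex := [(1,0), (1,5), (1,3), (1,1), (1,6), (1,4), (1,2), (2,0), (2,5), (2,3), (2,1), (2,6), (2,4), (2,2), (0,0), (0,5), (0,3), (0,1), (0,6), (0,4), (0,2), (3,0), (3,5), (3,3), (3,1), (3,6), (3,4), (3,2)]
def s8 : coxeterGraph ≃g coxeterGraph := mkIso (ofT s8T) (ofT s8I) (by decide) (by decide) (by decide)

def s9T : List CoxeterVertex := [(2,0), (2,3), (3,3), (0,3), (0,4), (3,4), (2,4), (1,0), (2,2), (1,5), (3,2), (3,5), (1,2), (2,5), (0,0), (3,6), (1,1), (0,1), (0,6), (1,6), (3,1), (3,0), (2,6), (1,3), (0,2), (0,5), (1,4), (2,1)]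
def s9I : List CoxeterVertex := [(2,0), (2,3), (3,3), (0,3), (0,4), (3,4), (2,4), (1,0), (2,2), (1,5), (3,2), (3,5), (1,2), (2,5), (0,0), (3,6), (1,1), (0,1), (0,6), (1,6), (3,1), (3,0), (2,6), (1,3), (0,2), (0,5), (1,4), (2,1)]
def s9 : coxeterGraph ≃g coxeterGraph := mkIso (ofT s9T) (ofT s9I) (by decide) (by decide) (by decide)

def s10T : List CoxeterVertex := [(2,0), (2,4), (2,1), (2,5), (2,2), (2,6), (2,3), (0,0), (0,4), (0,1), (0,5), (0,2), (0,6), (0,3), (1,0), (1,4), (1,1), (1,5), (1,2), (1,6), (1,3), (3,0), (3,4), (3,1), (3,5), (3,2), (3,6), (3,3)]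
def s10I : List CoxeterVertex := [(1,0), (1,2), (1,4), (1,6), (1,1), (1,3), (1,5), (2,0), (2,2), (2,4), (2,6), (2,1), (2,3), (2,5), (0,0), (0,2), (0,4), (0,6), (0,1), (0,3), (0,5), (3,0), (3,2), (3,4), (3,6), (3,1), (3,3), (3,5)]
def s10 : coxeterGraph ≃g coxeterGraph := mkIso (ofT s10T) (ofT s10I) (by decide) (by decide) (by decide)

def s11T : List CoxeterVertex := [(2,0), (2,4), (3,4), (0,4), (0,3), (3,3), (2,3), (1,0), (2,5), (1,2), (3,5), (3,2), (1,5), (2,2), (0,0), (3,1), (1,6), (0,6), (0,1), (1,1), (3,6), (3,0), (2,1), (1,4), (0,5), (0,2), (1,3), (2,6)]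
def s11I : List CoxeterVertex := [(2,0), (2,4), (3,4), (0,4), (0,3), (3,3), (2,3), (1,0), (2,5), (1,2), (3,5), (3,2), (1,5), (2,2), (0,0), (3,1), (1,6), (0,6), (0,1), (1,1), (3,6), (3,0), (2,1), (1,4), (0,5), (0,2), (1,3), (2,6)]
def s11 : coxeterGraph ≃g coxeterGraph := mkIso (ofT s11T) (ofT s11I) (by decide) (by decide) (by decide)

def g0T : List CoxeterVertex := [(3,0), (0,0), (0,1), (0,2), (3,2), (1,2), (1,0), (2,4), (0,5), (2,1), (0,4), (2,5), (3,4), (3,5), (2,3), (3,6), (1,1), (3,3), (2,6), (1,6), (1,3), (2,0), (0,6), (3,1), (0,3), (2,2), (1,4), (1,5)]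
def g0I : List CoxeterVertex := [(0,1), (0,2), (0,3), (3,3), (1,3), (1,1), (3,1), (0,6), (2,2), (0,5), (2,6), (3,5), (3,6), (2,5), (3,0), (1,2), (3,4), (2,0), (1,0), (1,4), (2,4), (0,0), (3,2), (0,4), (2,3), (1,5), (1,6), (2,1)]
def g0 : coxeterGraph ≃g coxeterGraph := mkIso (ofT g0T) (ofT g0I) (by decide) (by decide) (by decide)

def g1T : List CoxeterVertex := [(0,0), (3,0), (1,0), (1,2), (3,2), (0,2), (0,1), (0,5), (2,4), (3,5), (3,4), (2,5), (0,4), (2,1), (3,6), (2,3), (1,3), (1,6), (2,6), (3,3), (1,1), (0,6), (2,0), (1,5), (1,4), (2,2), (0,3), (3,1)]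
def g1I : List CoxeterVertex := [(0,0), (0,6), (0,5), (3,5), (1,5), (1,0), (3,0), (0,2), (2,6), (0,3), (2,2), (3,3), (3,2), (2,3), (3,1), (1,6), (3,4), (2,1), (1,1), (1,4), (2,4), (0,1), (3,6), (0,4), (2,5), (1,3), (1,2), (2,0)]
def g1 : coxeterGraph ≃g coxeterGraph := mkIso (ofT g1T) (ofT g1I) (by decide) (by decide) (by decide)

def g2T : List CoxeterVertex := [(0,1), (0,0), (3,0), (1,0), (1,2), (3,2), (0,2), (2,1), (0,5), (2,4), (3,5), (3,4), (2,5), (0,4), (1,1), (3,6), (2,3), (1,3), (1,6), (2,6), (3,3), (3,1), (0,6), (2,0), (1,5), (1,4), (2,2), (0,3)]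
def g2I : List CoxeterVertex := [(0,1), (0,0), (0,6), (3,6), (1,6), (1,1), (3,1), (0,3), (2,0), (0,4), (2,3), (3,4), (3,3), (2,4), (3,2), (1,0), (3,5), (2,2), (1,2), (1,5), (2,5), (0,2), (3,0), (0,5), (2,6), (1,4), (1,3), (2,1)]
def g2 : coxeterGraph ≃g coxeterGraph := mkIso (ofT g2T) (ofT g2I) (by decide) (by decide) (by decide)

def g3T : List CoxeterVertex := [(0,2), (0,1), (0,0), (3,0), (1,0), (1,2), (3,2), (0,4), (2,1), (0,5), (2,4), (3,5), (3,4), (2,5), (3,3), (1,1), (3,6), (2,3), (1,3), (1,6), (2,6), (0,3), (3,1), (0,6), (2,0), (1,5), (1,4), (2,2)]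
def g3I : List CoxeterVertex := [(0,2), (0,1), (0,0), (3,0), (1,0), (1,2), (3,2), (0,4), (2,1), (0,5), (2,4), (3,5), (3,4), (2,5), (3,3), (1,1), (3,6), (2,3), (1,3), (1,6), (2,6), (0,3), (3,1), (0,6), (2,0), (1,5), (1,4), (2,2)]
def g3 : coxeterGraph ≃g coxeterGraph := mkIso (ofT g3T) (ofT g3I) (by decide) (by decide) (by decide)

def g4T : List CoxeterVertex := [(0,2), (3,2), (1,2), (1,0), (3,0), (0,0), (0,1), (0,4), (2,5), (3,4), (3,5), (2,4), (0,5), (2,1), (3,3), (2,6), (1,6), (1,3), (2,3), (3,6), (1,1), (0,3), (2,2), (1,4), (1,5), (2,0), (0,6), (3,1)]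
def g4I : List CoxeterVertex := [(0,5), (0,6), (0,0), (3,0), (1,0), (1,5), (3,5), (0,3), (2,6), (0,2), (2,3), (3,2), (3,3), (2,2), (3,4), (1,6), (3,1), (2,4), (1,4), (1,1), (2,1), (0,4), (3,6), (0,1), (2,0), (1,2), (1,3), (2,5)]
def g4 : coxeterGraph ≃g coxeterGraph := mkIso (ofT g4T) (ofT g4I) (by decide) (by decide) (by decide)

def g5T : List CoxeterVertex := [(0,1), (0,2), (3,2), (1,2), (1,0), (3,0), (0,0), (2,1), (0,4), (2,5), (3,4), (3,5), (2,4), (0,5), (1,1), (3,3), (2,6), (1,6), (1,3), (2,3), (3,6), (3,1), (0,3), (2,2), (1,4), (1,5), (2,0), (0,6)]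
def g5I : List CoxeterVertex := [(0,6), (0,0), (0,1), (3,1), (1,1), (1,6), (3,6), (0,4), (2,0), (0,3), (2,4), (3,3), (3,4), (2,3), (3,5), (1,0), (3,2), (2,5), (1,5), (1,2), (2,2), (0,5), (3,0), (0,2), (2,1), (1,3), (1,4), (2,6)]
def g5 : coxeterGraph ≃g coxeterGraph := mkIso (ofT g5T) (ofT g5I) (by decide) (by decide) (by decide)

def g6T : List CoxeterVertex := [(0,0), (0,1), (0,2), (3,2), (1,2), (1,0), (3,0), (0,5), (2,1), (0,4), (2,5), (3,4), (3,5), (2,4), (3,6), (1,1), (3,3), (2,6), (1,6), (1,3), (2,3), (0,6), (3,1), (0,3), (2,2), (1,4), (1,5), (2,0)]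
def g6I : List CoxeterVertex := [(0,0), (0,1), (0,2), (3,2), (1,2), (1,0), (3,0), (0,5), (2,1), (0,4), (2,5), (3,4), (3,5), (2,4), (3,6), (1,1), (3,3), (2,6), (1,6), (1,3), (2,3), (0,6), (3,1), (0,3), (2,2), (1,4), (1,5), (2,0)]
def g6 : coxeterGraph ≃g coxeterGraph := mkIso (ofT g6T) (ofT g6I) (by decide) (by decide) (by decide)

def g7T : List CoxeterVertex := [(0,1), (0,2), (3,2), (2,2), (2,5), (2,1), (3,1), (3,0), (3,3), (1,0), (2,3), (1,5), (2,0), (1,3), (0,6), (0,4), (1,4), (3,6), (0,5), (3,4), (1,6), (0,0), (0,3), (1,2), (2,6), (3,5), (2,4), (1,1)]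
def g7I : List CoxeterVertex := [(3,0), (0,0), (0,1), (3,1), (2,1), (2,4), (2,0), (1,2), (3,6), (3,2), (1,6), (2,2), (1,4), (2,6), (1,5), (0,5), (0,3), (1,3), (3,5), (0,4), (3,3), (1,0), (0,6), (0,2), (1,1), (2,5), (3,4), (2,3)]
def g7 : coxeterGraph ≃g coxeterGraph := mkIso (ofT g7T) (ofT g7I) (by decide) (by decide) (by decide)

def g8T : List CoxeterVertex := [(0,2), (0,1), (3,1), (2,1), (2,5), (2,2), (3,2), (3,3), (3,0), (1,3), (2,0), (1,5), (2,3), (1,0), (0,4), (0,6), (1,6), (3,4), (0,5), (3,6), (1,4), (0,3), (0,0), (1,1), (2,4), (3,5), (2,6), (1,2)]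
def g8I : List CoxeterVertex := [(3,1), (0,1), (0,0), (3,0), (2,0), (2,4), (2,1), (1,6), (3,2), (3,6), (1,2), (2,6), (1,4), (2,2), (1,3), (0,3), (0,5), (1,5), (3,3), (0,4), (3,5), (1,1), (0,2), (0,6), (1,0), (2,3), (3,4), (2,5)]
def g8 : coxeterGraph ≃g coxeterGraph := mkIso (ofT g8T) (ofT g8I) (by decide) (by decide) (by decide)

def g9T : List CoxeterVertex := [(0,2), (3,2), (1,2), (1,4), (3,4), (0,4), (0,3), (0,0), (2,6), (3,0), (3,6), (2,0), (0,6), (2,3), (3,1), (2,5), (1,5), (1,1), (2,1), (3,5), (1,3), (0,1), (2,2), (1,0), (1,6), (2,4), (0,5), (3,3)]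
def g9I : List CoxeterVertex := [(1,0), (3,0), (0,0), (0,6), (0,5), (3,5), (1,5), (3,2), (2,3), (0,2), (2,6), (0,3), (2,2), (3,3), (1,4), (2,4), (3,1), (1,6), (3,4), (2,1), (1,1), (1,2), (2,0), (0,1), (3,6), (0,4), (2,5), (1,3)]
def g9 : coxeterGraph ≃g coxeterGraph := mkIso (ofT g9T) (ofT g9I) (by decide) (by decide) (by decide)

def g10T : List CoxeterVertex := [(0,3), (0,2), (3,2), (1,2), (1,4), (3,4), (0,4), (2,3), (0,0), (2,6), (3,0), (3,6), (2,0), (0,6), (1,3), (3,1), (2,5), (1,5), (1,1), (2,1), (3,5), (3,3), (0,1), (2,2), (1,0), (1,6), (2,4), (0,5)]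
def g10I : List CoxeterVertex := [(1,1), (3,1), (0,1), (0,0), (0,6), (3,6), (1,6), (3,3), (2,4), (0,3), (2,0), (0,4), (2,3), (3,4), (1,5), (2,5), (3,2), (1,0), (3,5), (2,2), (1,2), (1,3), (2,1), (0,2), (3,0), (0,5), (2,6), (1,4)]
def g10 : coxeterGraph ≃g coxeterGraph := mkIso (ofT g10T) (ofT g10I) (by decide) (by decide) (by decide)

def g11T : List CoxeterVertex := [(0,3), (0,4), (0,5), (3,5), (1,5), (1,3), (3,3), (0,1), (2,4), (0,0), (2,1), (3,0), (3,1), (2,0), (3,2), (1,4), (3,6), (2,2), (1,2), (1,6), (2,6), (0,2), (3,4), (0,6), (2,5), (1,0), (1,1), (2,3)]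
def g11I : List CoxeterVertex := [(1,2), (1,0), (3,0), (0,0), (0,1), (0,2), (3,2), (3,4), (3,5), (2,4), (0,5), (2,1), (0,4), (2,5), (1,6), (1,3), (2,3), (3,6), (1,1), (3,3), (2,6), (1,4), (1,5), (2,0), (0,6), (3,1), (0,3), (2,2)]
def g11 : coxeterGraph ≃g coxeterGraph := mkIso (ofT g11T) (ofT g11I) (by decide) (by decide) (by decide)

def g12T : List CoxeterVertex := [(0,2), (0,3), (0,4), (3,4), (1,4), (1,2), (3,2), (0,0), (2,3), (0,6), (2,0), (3,6), (3,0), (2,6), (3,1), (1,3), (3,5), (2,1), (1,1), (1,5), (2,5), (0,1), (3,3), (0,5), (2,4), (1,6), (1,0), (2,2)]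
def g12I : List CoxeterVertex := [(1,0), (3,0), (0,0), (0,1), (0,2), (3,2), (1,2), (3,5), (2,4), (0,5), (2,1), (0,4), (2,5), (3,4), (1,3), (2,3), (3,6), (1,1), (3,3), (2,6), (1,6), (1,5), (2,0), (0,6), (3,1), (0,3), (2,2), (1,4)]
def g12 : coxeterGraph ≃g coxeterGraph := mkIso (ofT g12T) (ofT g12I) (by decide) (by decide) (by decide)

def g13T : List CoxeterVertex := [(0,2), (3,2), (2,2), (2,5), (2,1), (3,1), (0,1), (3,3), (1,0), (2,3), (1,5), (2,0), (1,3), (3,0), (0,4), (1,4), (3,6), (0,5), (3,4), (1,6), (0,6), (0,3), (1,2), (2,6), (3,5), (2,4), (1,1), (0,0)]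
def g13I : List CoxeterVertex := [(3,6), (0,6), (0,0), (3,0), (2,0), (2,3), (2,6), (1,1), (3,5), (3,1), (1,5), (2,1), (1,3), (2,5), (1,4), (0,4), (0,2), (1,2), (3,4), (0,3), (3,2), (1,6), (0,5), (0,1), (1,0), (2,4), (3,3), (2,2)]
def g13 : coxeterGraph ≃g coxeterGraph := mkIso (ofT g13T) (ofT g13I) (by decide) (by decide) (by decide)

def g14T : List CoxeterVertex := [(0,1), (0,2), (0,3), (3,3), (1,3), (1,1), (3,1), (0,6), (2,2), (0,5), (2,6), (3,5), (3,6), (2,5), (3,0), (1,2), (3,4), (2,0), (1,0), (1,4), (2,4), (0,0), (3,2), (0,4), (2,3), (1,5), (1,6), (2,1)]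
def g14I : List CoxeterVertex := [(3,0), (0,0), (0,1), (0,2), (3,2), (1,2), (1,0), (2,4), (0,5), (2,1), (0,4), (2,5), (3,4), (3,5), (2,3), (3,6), (1,1), (3,3), (2,6), (1,6), (1,3), (2,0), (0,6), (3,1), (0,3), (2,2), (1,4), (1,5)]
def g14 : coxeterGraph ≃g coxeterGraph := mkIso (ofT g14T) (ofT g14I) (by decide) (by decide) (by decide)

def g15T : List CoxeterVertex := [(0,2), (0,1), (3,1), (1,1), (1,3), (3,3), (0,3), (2,2), (0,6), (2,5), (3,6), (3,5), (2,6), (0,5), (1,2), (3,0), (2,4), (1,4), (1,0), (2,0), (3,4), (3,2), (0,0), (2,1), (1,6), (1,5), (2,3), (0,4)]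
def g15I : List CoxeterVertex := [(3,1), (0,1), (0,0), (0,6), (3,6), (1,6), (1,1), (2,4), (0,3), (2,0), (0,4), (2,3), (3,4), (3,3), (2,5), (3,2), (1,0), (3,5), (2,2), (1,2), (1,5), (2,1), (0,2), (3,0), (0,5), (2,6), (1,4), (1,3)]
def g15 : coxeterGraph ≃g coxeterGraph := mkIso (ofT g15T) (ofT g15I) (by decide) (by decide) (by decide)

def g16T : List CoxeterVertex := [(0,3), (0,2), (0,1), (3,1), (1,1), (1,3), (3,3), (0,5), (2,2), (0,6), (2,5), (3,6), (3,5), (2,6), (3,4), (1,2), (3,0), (2,4), (1,4), (1,0), (2,0), (0,4), (3,2), (0,0), (2,1), (1,6), (1,5), (2,3)]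
def g16I : List CoxeterVertex := [(3,2), (0,2), (0,1), (0,0), (3,0), (1,0), (1,2), (2,5), (0,4), (2,1), (0,5), (2,4), (3,5), (3,4), (2,6), (3,3), (1,1), (3,6), (2,3), (1,3), (1,6), (2,2), (0,3), (3,1), (0,6), (2,0), (1,5), (1,4)]
def g16 : coxeterGraph ≃g coxeterGraph := mkIso (ofT g16T) (ofT g16I) (by decide) (by decide) (by decide)

def g17T : List CoxeterVertex := [(0,2), (0,3), (3,3), (2,3), (2,6), (2,2), (3,2), (3,1), (3,4), (1,1), (2,4), (1,6), (2,1), (1,4), (0,0), (0,5), (1,5), (3,0), (0,6), (3,5), (1,0), (0,1), (0,4), (1,3), (2,0), (3,6), (2,5), (1,2)]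
def g17I : List CoxeterVertex := [(2,0), (3,0), (0,0), (0,1), (3,1), (2,1), (2,4), (2,6), (1,2), (3,6), (3,2), (1,6), (2,2), (1,4), (3,3), (1,5), (0,5), (0,3), (1,3), (3,5), (0,4), (2,3), (1,0), (0,6), (0,2), (1,1), (2,5), (3,4)]
def g17 : coxeterGraph ≃g coxeterGraph := mkIso (ofT g17T) (ofT g17I) (by decide) (by decide) (by decide)

def g18T : List CoxeterVertex := [(0,2), (3,2), (2,2), (2,6), (2,3), (3,3), (0,3), (3,1), (1,4), (2,1), (1,6), (2,4), (1,1), (3,4), (0,0), (1,0), (3,5), (0,6), (3,0), (1,5), (0,5), (0,1), (1,2), (2,5), (3,6), (2,0), (1,3), (0,4)]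
def g18I : List CoxeterVertex := [(2,0), (3,0), (0,0), (0,6), (3,6), (2,6), (2,3), (2,1), (1,5), (3,1), (3,5), (1,1), (2,5), (1,3), (3,4), (1,2), (0,2), (0,4), (1,4), (3,2), (0,3), (2,4), (1,0), (0,1), (0,5), (1,6), (2,2), (3,3)]
def g18 : coxeterGraph ≃g coxeterGraph := mkIso (ofT g18T) (ofT g18I) (by decide) (by decide) (by decide)

def g19T : List CoxeterVertex := [(0,3), (0,2), (3,2), (2,2), (2,6), (2,3), (3,3), (3,4), (3,1), (1,4), (2,1), (1,6), (2,4), (1,1), (0,5), (0,0), (1,0), (3,5), (0,6), (3,0), (1,5), (0,4), (0,1), (1,2), (2,5), (3,6), (2,0), (1,3)]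
def g19I : List CoxeterVertex := [(2,1), (3,1), (0,1), (0,0), (3,0), (2,0), (2,4), (2,2), (1,6), (3,2), (3,6), (1,2), (2,6), (1,4), (3,5), (1,3), (0,3), (0,5), (1,5), (3,3), (0,4), (2,5), (1,1), (0,2), (0,6), (1,0), (2,3), (3,4)]
def g19 : coxeterGraph ≃g coxeterGraph := mkIso (ofT g19T) (ofT g19I) (by decide) (by decide) (by decide)

def g20T : List CoxeterVertex := [(0,2), (0,3), (3,3), (1,3), (1,1), (3,1), (0,1), (2,2), (0,5), (2,6), (3,5), (3,6), (2,5), (0,6), (1,2), (3,4), (2,0), (1,0), (1,4), (2,4), (3,0), (3,2), (0,4), (2,3), (1,5), (1,6), (2,1), (0,0)]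
def g20I : List CoxeterVertex := [(3,6), (0,6), (0,0), (0,1), (3,1), (1,1), (1,6), (2,3), (0,4), (2,0), (0,3), (2,4), (3,3), (3,4), (2,2), (3,5), (1,0), (3,2), (2,5), (1,5), (1,2), (2,6), (0,5), (3,0), (0,2), (2,1), (1,3), (1,4)]
def g20 : coxeterGraph ≃g coxeterGraph := mkIso (ofT g20T) (ofT g20I) (by decide) (by decide) (by decide)

def g21T : List CoxeterVertex := [(0,0), (0,1), (0,2), (0,3), (0,4), (0,5), (0,6), (1,0), (1,1), (1,2), (1,3), (1,4), (1,5), (1,6), (2,0), (2,1), (2,2), (2,3), (2,4), (2,5), (2,6), (3,0), (3,1), (3,2), (3,3), (3,4), (3,5), (3,6)]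
def g21I : List CoxeterVertex := [(0,0), (0,1), (0,2), (0,3), (0,4), (0,5), (0,6), (1,0), (1,1), (1,2), (1,3), (1,4), (1,5), (1,6), (2,0), (2,1), (2,2), (2,3), (2,4), (2,5), (2,6), (3,0), (3,1), (3,2), (3,3), (3,4), (3,5), (3,6)]
def g21 : coxeterGraph ≃g coxeterGraph := mkIso (ofT g21T) (ofT g21I) (by decide) (by decide) (by decide)

def g22T : List CoxeterVertex := [(0,1), (0,0), (0,6), (0,5), (0,4), (0,3), (0,2), (1,1), (1,0), (1,6), (1,5), (1,4), (1,3), (1,2), (2,1), (2,0), (2,6), (2,5), (2,4), (2,3), (2,2), (3,1), (3,0), (3,6), (3,5), (3,4), (3,3), (3,2)]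
def g22I : List CoxeterVertex := [(0,1), (0,0), (0,6), (0,5), (0,4), (0,3), (0,2), (1,1), (1,0), (1,6), (1,5), (1,4), (1,3), (1,2), (2,1), (2,0), (2,6), (2,5), (2,4), (2,3), (2,2), (3,1), (3,0), (3,6), (3,5), (3,4), (3,3), (3,2)]
def g22 : coxeterGraph ≃g coxeterGraph := mkIso (ofT g22T) (ofT g22I) (by decide) (by decide) (by decide)

def g23T : List CoxeterVertex := [(0,2), (0,1), (0,0), (0,6), (0,5), (0,4), (0,3), (1,2), (1,1), (1,0), (1,6), (1,5), (1,4), (1,3), (2,2), (2,1), (2,0), (2,6), (2,5), (2,4), (2,3), (3,2), (3,1), (3,0), (3,6), (3,5), (3,4), (3,3)]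
def g23I : List CoxeterVertex := [(0,2), (0,1), (0,0), (0,6), (0,5), (0,4), (0,3), (1,2), (1,1), (1,0), (1,6), (1,5), (1,4), (1,3), (2,2), (2,1), (2,0), (2,6), (2,5), (2,4), (2,3), (3,2), (3,1), (3,0), (3,6), (3,5), (3,4), (3,3)]
def g23 : coxeterGraph ≃g coxeterGraph := mkIso (ofT g23T) (ofT g23I) (by decide) (by decide) (by decide)

def g24T : List CoxeterVertex := [(0,3), (0,2), (0,1), (0,0), (0,6), (0,5), (0,4), (1,3), (1,2), (1,1), (1,0), (1,6), (1,5), (1,4), (2,3), (2,2), (2,1), (2,0), (2,6), (2,5), (2,4), (3,3), (3,2), (3,1), (3,0), (3,6), (3,5), (3,4)]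
def g24I : List CoxeterVertex := [(0,3), (0,2), (0,1), (0,0), (0,6), (0,5), (0,4), (1,3), (1,2), (1,1), (1,0), (1,6), (1,5), (1,4), (2,3), (2,2), (2,1), (2,0), (2,6), (2,5), (2,4), (3,3), (3,2), (3,1), (3,0), (3,6), (3,5), (3,4)]
def g24 : coxeterGraph ≃g coxeterGraph := mkIso (ofT g24T) (ofT g24I) (by decide) (by decide) (by decide)

def g25T : List CoxeterVertex := [(0,3), (0,4), (0,5), (0,6), (0,0), (0,1), (0,2), (1,3), (1,4), (1,5), (1,6), (1,0), (1,1), (1,2), (2,3), (2,4), (2,5), (2,6), (2,0), (2,1), (2,2), (3,3), (3,4), (3,5), (3,6), (3,0), (3,1), (3,2)]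
def g25I : List CoxeterVertex := [(0,4), (0,5), (0,6), (0,0), (0,1), (0,2), (0,3), (1,4), (1,5), (1,6), (1,0), (1,1), (1,2), (1,3), (2,4), (2,5), (2,6), (2,0), (2,1), (2,2), (2,3), (3,4), (3,5), (3,6), (3,0), (3,1), (3,2), (3,3)]
def g25 : coxeterGraph ≃g coxeterGraph := mkIso (ofT g25T) (ofT g25I) (by decide) (by decide) (by decide)

def g26T : List CoxeterVertex := [(0,2), (0,3), (0,4), (0,5), (0,6), (0,0), (0,1), (1,2), (1,3), (1,4), (1,5), (1,6), (1,0), (1,1), (2,2), (2,3), (2,4), (2,5), (2,6), (2,0), (2,1), (3,2), (3,3), (3,4), (3,5), (3,6), (3,0), (3,1)]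
def g26I : List CoxeterVertex := [(0,5), (0,6), (0,0), (0,1), (0,2), (0,3), (0,4), (1,5), (1,6), (1,0), (1,1), (1,2), (1,3), (1,4), (2,5), (2,6), (2,0), (2,1), (2,2), (2,3), (2,4), (3,5), (3,6), (3,0), (3,1), (3,2), (3,3), (3,4)]
def g26 : coxeterGraph ≃g coxeterGraph := mkIso (ofT g26T) (ofT g26I) (by decide) (by decide) (by decide)

def g27T : List CoxeterVertex := [(0,1), (0,2), (0,3), (0,4), (0,5), (0,6), (0,0), (1,1), (1,2), (1,3), (1,4), (1,5), (1,6), (1,0), (2,1), (2,2), (2,3), (2,4), (2,5), (2,6), (2,0), (3,1), (3,2), (3,3), (3,4), (3,5), (3,6), (3,0)]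
def g27I : List CoxeterVertex := [(0,6), (0,0), (0,1), (0,2), (0,3), (0,4), (0,5), (1,6), (1,0), (1,1), (1,2), (1,3), (1,4), (1,5), (2,6), (2,0), (2,1), (2,2), (2,3), (2,4), (2,5), (3,6), (3,0), (3,1), (3,2), (3,3), (3,4), (3,5)]
def g27 : coxeterGraph ≃g coxeterGraph := mkIso (ofT g27T) (ofT g27I) (by decide) (by decide) (by decide)

def stabList : List (coxeterGraph ≃g coxeterGraph) := [s0, s1, s2, s3, s4, s5, s6, s7, s8, s9, s10, s11]
def transList : List (coxeterGraph ≃g coxeterGraph) := [g0, g1, g2, g3, g4, g5, g6, g7, g8, g9, g10, g11, g12, g13, g14, g15, g16, g17, g18, g19, g20, g21, g22, g23, g24, g25, g26, g27]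
/-- distance table from the base vertex `(3,0)`. -/
def Dtbl : List ℕ := [1, 2, 3, 4, 4, 3, 2, 1, 4, 2, 3, 3, 2, 4, 1, 3, 4, 2, 2, 4, 3, 0, 3, 3, 3, 3, 3, 3]
def Dfun : CoxeterVertex → ℕ := fun p => Dtbl.getD (p.1.val * 7 + p.2.val) 0

/-- A BFS-style characterization of graph distance from a base vertex. -/
lemma dist_eq_of {α : Type*} (G : SimpleGraph α) (b : α) (D : α → ℕ) (hb : D b = 0)
    (hdown : ∀ w, w ≠ b → ∃ w', G.Adj w w' ∧ D w' + 1 = D w)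
    (hstep : ∀ w w', G.Adj w w' → D w ≤ D w' + 1) :
    ∀ w, G.dist b w = D w := by
  have upper : ∀ n w, D w = n → G.Reachable b w ∧ G.dist b w ≤ D w := by
    intro n
    induction n using Nat.strong_induction_on with
    | _ n ih =>
      intro w hw
      by_cases hwb : w = b
      · subst hwb
        refine ⟨SimpleGraph.Reachable.refl _, ?_⟩
        rw [SimpleGraph.dist_self]
        exact Nat.zero_le _
      · obtain ⟨w', hadj, h1⟩ := hdown w hwb
        have hlt : D w' < n := by omega
        obtain ⟨hr, hd⟩ := ih (D w') hlt w' rfl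
        obtain ⟨p, hp⟩ := hr.exists_walk_length_eq_dist
        refine ⟨⟨p.concat hadj.symm⟩, ?_⟩
        calc G.dist b w ≤ (p.concat hadj.symm).length := SimpleGraph.dist_le _
          _ = p.length + 1 := SimpleGraph.Walk.length_concat _ _
          _ = G.dist b w' + 1 := by rw [hp]
          _ ≤ D w' + 1 := by omega
          _ = D w := h1
  have lower : ∀ (x w : α) (p : G.Walk x w), D w ≤ D x + p.length := by
    intro x w p
    induction p with
    | nil => exact Nat.le_add_right _ _
    | cons h p ih =>
      have h1 := hstep _ _ h
      have h2 := hstep _ _ h.symm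
      simp only [SimpleGraph.Walk.length_cons]
      omega
  intro w
  obtain ⟨hr, hd⟩ := upper (D w) w rfl
  obtain ⟨p, hp⟩ := hr.exists_walk_length_eq_dist
  have := lower b w p
  rw [hp, hb] at this
  omega

lemma iso_dist_le {α β : Type*} {G : SimpleGraph α} {G' : SimpleGraph β}
    (φ : G ≃g G') (u v : α) : G'.dist (φ u) (φ v) ≤ G.dist u v := by
  by_cases h : G.Reachable u v
  · obtain ⟨p, hp⟩ := h.exists_walk_length_eq_dist
    calc G'.dist (φ u) (φ v) ≤ (p.map φ.toHom).length := SimpleGraph.dist_le _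
      _ = p.length := SimpleGraph.Walk.length_map _ _
      _ = G.dist u v := hp
  · have h' : ¬ G'.Reachable (φ u) (φ v) := by
      intro h'
      have h2 := h'.map φ.symm.toHom
      have e1 : φ.symm.toHom (φ u) = u := RelIso.symm_apply_apply φ u
      have e2 : φ.symm.toHom (φ v) = v := RelIso.symm_apply_apply φ v
      rw [e1, e2] at h2
      exact h h2
    rw [SimpleGraph.dist_eq_zero_of_not_reachable h,
      SimpleGraph.dist_eq_zero_of_not_reachable h']

lemma iso_dist {α β : Type*} {G : SimpleGraph α} {G' : SimpleGraph β}
    (φ : G ≃g G') (u v : α) : G'.dist (φ u) (φ v) = G.dist u v := by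
  refine le_antisymm (iso_dist_le φ u v) ?_
  have := iso_dist_le φ.symm (φ u) (φ v)
  simpa using this

lemma dist_base : ∀ w, coxeterGraph.dist ((3 : Fin 4), (0 : ZMod 7)) w = Dfun w :=
  dist_eq_of coxeterGraph _ Dfun (by decide) (by decide) (by decide)

lemma stab_works : ∀ w w' : CoxeterVertex, Dfun w = Dfun w' →
    ∃ φ ∈ stabList, φ ((3 : Fin 4), (0 : ZMod 7)) = ((3 : Fin 4), (0 : ZMod 7)) ∧ φ w = w' := by
  decide

lemma trans_works : ∀ w : CoxeterVertex,
    ∃ φ ∈ transList, φ w = ((3 : Fin 4), (0 : ZMod 7)) := by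
  decide

/-- The Coxeter graph is distance-transitive. -/
theorem coxeterGraph_distance_transitive
    (u v u' v' : CoxeterVertex)
    (h : coxeterGraph.dist u v = coxeterGraph.dist u' v') :
    ∃ φ : coxeterGraph ≃g coxeterGraph, φ u = u' ∧ φ v = v' := by
  obtain ⟨α, -, hα⟩ := trans_works u
  obtain ⟨β, -, hβ⟩ := trans_works u'
  have e1 : coxeterGraph.dist ((3 : Fin 4), (0 : ZMod 7)) (α v) = coxeterGraph.dist u v := by
    rw [← hα]; exact iso_dist α u v
  have e2 : coxeterGraph.dist ((3 : Fin 4), (0 : ZMod 7)) (β v') = coxeterGraph.dist u' v' := by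
    rw [← hβ]; exact iso_dist β u' v'
  have h2 : Dfun (α v) = Dfun (β v') := by
    rw [← dist_base, ← dist_base, e1, e2]
    exact h
  obtain ⟨φ, -, hfix, hmove⟩ := stab_works (α v) (β v') h2
  refine ⟨(α.trans φ).trans β.symm, ?_, ?_⟩
  · show β.symm (φ (α u)) = u'
    rw [hα, hfix, ← hβ, RelIso.symm_apply_apply]
  · show β.symm (φ (α v)) = v'
    rw [hmove, RelIso.symm_apply_apply]
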